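/- arXiv:1605.05131 — 6 statements merged into one kernel-verified Lean document; each statement's English description precedes it below -/
import Mathlib

section
/- For every positive integer n, the companion matrix of t^n (i.e., the nilpotent Jordan block transpose, with 1's on the subdiagonal and zeros elsewhere) is the sum of two square-zero matrices. -/
/-! Split the subdiagonal of `C(t^n)` by the parity of the column: a product of two such
matrices passes through two consecutive subdiagonal entries, whose columns `j` and `j + 1`
have different parities, so each parity class alone gives a square-zero matrix. -/

namespace Matrix

variable {R : Type*} {n : ℕ}

variable (R n) in
def subdiagonalOn [Zero R] [One R] (p : ℕ → Prop) [DecidablePred p] :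
    Matrix (Fin n) (Fin n) R :=
  of fun i j => if (i : ℕ) = (j : ℕ) + 1 ∧ p j then 1 else 0

theorem subdiagonalOn_mul_subdiagonalOn_eq_zero [NonAssocSemiring R] (p q : ℕ → Prop)
    [DecidablePred p] [DecidablePred q] (hpq : ∀ j, q j → ¬ p (j + 1)) :
    subdiagonalOn R n p * subdiagonalOn R n q = 0 := by
  ext i j
  rw [mul_apply, zero_apply]
  refine Finset.sum_eq_zero fun k _ => ?_
  by_cases hk : (i : ℕ) = (k : ℕ) + 1 ∧ p k
  · have hkj : ¬ ((k : ℕ) = (j : ℕ) + 1 ∧ q j) := fun ⟨hkj, hj⟩ => hpq j hj (hkj ▸ hk.2)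
    simp [subdiagonalOn, hkj]
  · simp [subdiagonalOn, hk]

theorem subdiagonalOn_add_subdiagonalOn_not [AddZeroClass R] [One R] (p : ℕ → Prop)
    [DecidablePred p] :
    subdiagonalOn R n p + subdiagonalOn R n (fun j => ¬ p j) =
      fun i j : Fin n => if (i : ℕ) = (j : ℕ) + 1 then (1 : R) else 0 := by
  ext i j
  by_cases hij : (i : ℕ) = (j : ℕ) + 1 <;> by_cases hj : p j <;> simp [subdiagonalOn, hij, hj]

end Matrix

open Matrix in
theorem companion_pow_sum_two_square_zero_general (F : Type*) [Field F] (n : ℕ) :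
    ∃ A B : Matrix (Fin n) (Fin n) F,
      A ^ 2 = 0 ∧ B ^ 2 = 0 ∧
      (fun i j : Fin n => if (i : ℕ) = (j : ℕ) + 1 then (1 : F) else 0) = A + B := by
  refine ⟨subdiagonalOn F n Even, subdiagonalOn F n (fun j => ¬ Even j), ?_, ?_,
    (subdiagonalOn_add_subdiagonalOn_not Even).symm⟩
  · exact (sq _).trans <| subdiagonalOn_mul_subdiagonalOn_eq_zero _ _ fun j hj =>
      Nat.not_even_iff_odd.mpr (Even.add_one hj)
  · exact (sq _).trans <| subdiagonalOn_mul_subdiagonalOn_eq_zero _ _ fun j hj =>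
      not_not.mpr (Nat.even_add_one.mpr hj)

/-- The companion matrix of `t ^ n` (ones on the subdiagonal, zeros elsewhere)
is the sum of two square-zero matrices. -/
theorem companion_pow_sum_two_square_zero (F : Type*) [Field F] (n : ℕ) (hn : 0 < n) :
    ∃ A B : Matrix (Fin n) (Fin n) F,
      A ^ 2 = 0 ∧ B ^ 2 = 0 ∧
      (fun i j : Fin n => if (i : ℕ) = (j : ℕ) + 1 then (1 : F) else 0) = A + B :=
  companion_pow_sum_two_square_zero_general F n
end

section
/- For every non-constant monic polynomial p of degree n over a field F, the companion matrix C(p(t²)) ∈ Mat_{2n}(F) is similar to the block matrix [[0_n, C(p)], [I_n, 0_n]]. -/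
open Polynomial

/-- The companion matrix of a monic polynomial of degree `n`:
ones on the subdiagonal, and the negatives of the coefficients of `p`
in the last column. -/
def companion {F : Type*} [Field F] (n : ℕ) (p : Polynomial F) :
    Matrix (Fin n) (Fin n) F := fun i j =>
  if (j : ℕ) = n - 1 then -(p.coeff i)
  else if (i : ℕ) = (j : ℕ) + 1 then 1 else 0

/-!
Sending the first copy of `Fin n` to the even indices `2a` and the second to the odd indices
`2a + 1` is a permutation of `Fin (n + n)` that carries `C(p(t²))` to `[[0, C(p)], [I, 0]]`:
the subdiagonal of `C(p(t²))` alternates between the two blocks, and its last column only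
meets even rows nontrivially, since the coefficient of `t^(2a)` in `p(t²)` is that of `t^a` in `p`
and the odd ones vanish. Conjugation by the permutation matrix is the similarity.
-/

namespace Matrix

theorem submatrix_perm_eq_permMatrix_mul_mul {m R : Type*} [Fintype m] [DecidableEq m]
    [Semiring R] (σ : Equiv.Perm m) (M : Matrix m m R) :
    M.submatrix σ σ = σ.permMatrix R * M * σ⁻¹.permMatrix R := by
  rw [PEquiv.toMatrix_toPEquiv_mul, PEquiv.mul_toMatrix_toPEquiv, submatrix_submatrix]
  rfl

theorem exists_units_submatrix_perm_eq_mul_mul {m R : Type*} [Fintype m] [DecidableEq m]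
    [Semiring R] (σ : Equiv.Perm m) (M : Matrix m m R) :
    ∃ P : (Matrix m m R)ˣ, M.submatrix σ σ = P * M * P⁻¹ :=
  ⟨⟨σ.permMatrix R, σ⁻¹.permMatrix R, by simp [← permMatrix_mul],
      by simp [← permMatrix_mul]⟩,
    submatrix_perm_eq_permMatrix_mul_mul σ M⟩

end Matrix

def finSumFinEquivInterleave (n : ℕ) : Fin n ⊕ Fin n ≃ Fin (n + n) where
  toFun := Sum.elim (fun a => ⟨2 * a, by omega⟩) (fun a => ⟨2 * a + 1, by omega⟩)
  invFun i := if (i : ℕ) % 2 = 0 then .inl ⟨i / 2, by omega⟩ else .inr ⟨i / 2, by omega⟩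
  left_inv := by rintro (a | a) <;> simp [Nat.mul_add_div]
  right_inv i := by by_cases h : (i : ℕ) % 2 = 0 <;> simp [h, Fin.ext_iff] <;> omega

@[simp]
theorem finSumFinEquivInterleave_inl_val (n : ℕ) (a : Fin n) :
    (finSumFinEquivInterleave n (.inl a) : ℕ) = 2 * a := rfl

@[simp]
theorem finSumFinEquivInterleave_inr_val (n : ℕ) (a : Fin n) :
    (finSumFinEquivInterleave n (.inr a) : ℕ) = 2 * a + 1 := rfl

namespace Polynomial

variable {R : Type*} [CommSemiring R] (p : R[X]) (k : ℕ)

theorem coeff_comp_X_sq_two_mul : (p.comp (X ^ 2)).coeff (2 * k) = p.coeff k := by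
  rw [← expand_eq_comp_X_pow, coeff_expand_mul' two_pos]

theorem coeff_comp_X_sq_two_mul_add_one : (p.comp (X ^ 2)).coeff (2 * k + 1) = 0 := by
  rw [← expand_eq_comp_X_pow, coeff_expand two_pos, if_neg (by omega)]

end Polynomial

theorem companion_comp_X_sq_submatrix_finSumFinEquivInterleave {F : Type*} [Field F] (n : ℕ)
    (p : F[X]) :
    (companion (n + n) (p.comp (X ^ 2))).submatrix
        (finSumFinEquivInterleave n) (finSumFinEquivInterleave n) =
      Matrix.fromBlocks 0 (companion n p) 1 0 := by
  ext (a | a) (b | b) <;> have := b.isLt <;>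
    simp only [companion, Matrix.submatrix_apply, finSumFinEquivInterleave_inl_val,
      finSumFinEquivInterleave_inr_val, Matrix.fromBlocks_apply₁₁, Matrix.fromBlocks_apply₁₂,
      Matrix.fromBlocks_apply₂₁, Matrix.fromBlocks_apply₂₂, Matrix.zero_apply, Matrix.one_apply]
  · simp only [show ¬2 * (b : ℕ) = n + n - 1 by omega,
      show ¬2 * (a : ℕ) = 2 * b + 1 by omega, if_false]
  · simp only [show 2 * (b : ℕ) + 1 = n + n - 1 ↔ (b : ℕ) = n - 1 by omega,
      show 2 * (a : ℕ) = 2 * b + 1 + 1 ↔ (a : ℕ) = b + 1 by omega, coeff_comp_X_sq_two_mul]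
  · simp only [show ¬2 * (b : ℕ) = n + n - 1 by omega,
      show 2 * (a : ℕ) + 1 = 2 * b + 1 ↔ a = b by omega, if_false]
  · simp only [show ¬2 * (a : ℕ) + 1 = 2 * b + 1 + 1 by omega,
      coeff_comp_X_sq_two_mul_add_one, neg_zero, if_false, ite_self]

theorem companion_comp_sq_similar_block_general (F : Type*) [Field F] (n : ℕ) (p : Polynomial F) :
    ∃ P : (Matrix (Fin (n + n)) (Fin (n + n)) F)ˣ,
      companion (n + n) (p.comp (X ^ 2)) =
        (P : Matrix (Fin (n + n)) (Fin (n + n)) F) *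
          (Matrix.reindex finSumFinEquiv finSumFinEquiv
            (Matrix.fromBlocks 0 (companion n p) 1 0)) *
          ((↑P⁻¹ : Matrix (Fin (n + n)) (Fin (n + n)) F)) := by
  obtain ⟨P, hP⟩ := Matrix.exists_units_submatrix_perm_eq_mul_mul
    ((finSumFinEquivInterleave n).symm.trans finSumFinEquiv)
    (Matrix.reindex finSumFinEquiv finSumFinEquiv (Matrix.fromBlocks 0 (companion n p) 1 0))
  refine ⟨P, ?_⟩
  rw [← hP, ← companion_comp_X_sq_submatrix_finSumFinEquivInterleave]
  ext i j
  simp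

/-- For a non-constant monic polynomial `p` of degree `n`, the companion matrix
of `p(t²)` is similar to the block matrix `[[0, C(p)], [I, 0]]`. -/
theorem companion_comp_sq_similar_block (F : Type*) [Field F] (n : ℕ) (hn : 0 < n)
    (p : Polynomial F) (hp : p.Monic) (hdeg : p.natDegree = n) :
    ∃ P : (Matrix (Fin (n + n)) (Fin (n + n)) F)ˣ,
      companion (n + n) (p.comp (X ^ 2)) =
        (P : Matrix (Fin (n + n)) (Fin (n + n)) F) *
          (Matrix.reindex finSumFinEquiv finSumFinEquiv
            (Matrix.fromBlocks 0 (companion n p) 1 0)) *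
          ((↑P⁻¹ : Matrix (Fin (n + n)) (Fin (n + n)) F)) :=
  companion_comp_sq_similar_block_general F n p
end

section
/- For every even monic polynomial p (a polynomial in t²) over a field F, the companion matrix C(p) is the sum of two square-zero matrices. -/
open Polynomial

/-! An even polynomial has even degree and vanishing odd coefficients, so every nonzero entry of
its companion matrix lies in a row and a column of opposite parity. Hence the odd rows and the
even rows of the companion matrix form two matrices with vanishing squares: in each of them a
product `M i k * M k j` of entries has `i` and `k` of the same parity, so its first factor is
zero. -/

namespace Matrix

variable {n R : Type*} (P : n → Prop) [DecidablePred P]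

def restrictRows [Zero R] (M : Matrix n n R) : Matrix n n R :=
  of fun i j => if P i then M i j else 0

theorem restrictRows_add_restrictRows_not [AddZeroClass R] (M : Matrix n n R) :
    restrictRows P M + restrictRows (fun i => ¬P i) M = M := by
  ext i j
  by_cases hi : P i <;> simp [restrictRows, hi]

theorem restrictRows_sq_eq_zero [Fintype n] [DecidableEq n] [Semiring R] (M : Matrix n n R)
    (hM : ∀ i j, (P i ↔ P j) → M i j = 0) : restrictRows P M ^ 2 = 0 := by
  ext i j
  rw [sq, mul_apply, zero_apply]
  refine Finset.sum_eq_zero fun k _ => ?_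
  by_cases hi : P i
  · by_cases hk : P k
    · simp [restrictRows, hi, hM i k (iff_of_true hi hk)]
    · simp [restrictRows, hk]
  · simp [restrictRows, hi]

end Matrix

theorem Polynomial.coeff_expand_two_of_odd {R : Type*} [CommSemiring R] (q : R[X]) {k : ℕ}
    (hk : Odd k) : (expand R 2 q).coeff k = 0 := by
  rw [coeff_expand two_pos, if_neg (Nat.not_even_iff_odd.mpr hk ∘ even_iff_two_dvd.mpr)]

theorem companion_apply_eq_zero_of_even_iff {F : Type*} [Field F] {n : ℕ} {p : F[X]}
    (hn : Even n) (hp : ∀ k, Odd k → p.coeff k = 0) {i j : Fin n}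
    (hij : Even (i : ℕ) ↔ Even (j : ℕ)) : companion n p i j = 0 := by
  have hj := j.isLt
  obtain ⟨m, rfl⟩ := hn
  unfold companion
  split_ifs with hlast hsub
  · rw [hp i (Nat.not_even_iff_odd.mp fun hi => ?_), neg_zero]
    obtain ⟨r, hr⟩ := hij.mp hi
    omega
  · rw [hsub, Nat.even_add_one] at hij
    exact (iff_not_self hij.symm).elim
  · rfl

theorem companion_even_sum_two_square_zero_general (F : Type*) [Field F]
    (p : Polynomial F) (heven : ∃ q : Polynomial F, p = q.comp (X ^ 2)) :
    ∃ A B : Matrix (Fin p.natDegree) (Fin p.natDegree) F,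
      A ^ 2 = 0 ∧ B ^ 2 = 0 ∧ companion p.natDegree p = A + B := by
  obtain ⟨q, hq⟩ := heven
  rw [← expand_eq_comp_X_pow] at hq
  have hdeg : Even p.natDegree := by
    rw [hq, natDegree_expand]
    exact even_two.mul_left _
  have hodd : ∀ k, Odd k → p.coeff k = 0 := hq ▸ fun k => coeff_expand_two_of_odd q
  have hzero : ∀ i j : Fin p.natDegree,
      (Even (i : ℕ) ↔ Even (j : ℕ)) → companion p.natDegree p i j = 0 :=
    fun i j => companion_apply_eq_zero_of_even_iff hdeg hodd
  set P : Fin p.natDegree → Prop := fun i => Even (i : ℕ)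
  exact ⟨_, _, Matrix.restrictRows_sq_eq_zero P _ hzero,
    Matrix.restrictRows_sq_eq_zero _ _ fun i j hij => hzero i j (not_iff_not.mp hij),
    (Matrix.restrictRows_add_restrictRows_not P _).symm⟩

/-- For every even monic polynomial `p` (a polynomial in `t²`), the companion
matrix of `p` is the sum of two square-zero matrices. -/
theorem companion_even_sum_two_square_zero (F : Type*) [Field F]
    (p : Polynomial F) (hp : p.Monic) (heven : ∃ q : Polynomial F, p = q.comp (X ^ 2)) :
    ∃ A B : Matrix (Fin p.natDegree) (Fin p.natDegree) F,
      A ^ 2 = 0 ∧ B ^ 2 = 0 ∧ companion p.natDegree p = A + B :=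
  companion_even_sum_two_square_zero_general F p heven
end

section
/- For every odd monic polynomial p (i.e., p(−t) = −p(t)) over a field F, the companion matrix C(p) is the sum of two square-zero matrices. -/
/-!
Split the companion matrix `C` of `p` by the parity of the row index: `C = A + B`, where `A`
keeps the odd rows and `B` the even rows. The subdiagonal entries `C (j+1) j` join indices of
different parity, so the only entries joining two indices of equal parity lie in the last
column, indexed by `deg p - 1`, which is even since the leading coefficient of the odd `p` sits
in odd degree. On an odd row these entries lie outside the block of `A`; on an even row they
are the coefficients `-(p.coeff i)` with `i` even, which vanish. Hence `A` and `B` each map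
into the span of the basis vectors they kill.
-/

open Polynomial

namespace Matrix

variable {ι R : Type*}

def rowsWhere [Zero R] (P : ι → Prop) [DecidablePred P] (M : Matrix ι ι R) : Matrix ι ι R :=
  of fun i j => if P i then M i j else 0

theorem rowsWhere_add_rowsWhere_not [AddZeroClass R] (P : ι → Prop) [DecidablePred P]
    (M : Matrix ι ι R) : M.rowsWhere P + M.rowsWhere (fun i => ¬P i) = M := by
  ext i j
  by_cases h : P i <;> simp [rowsWhere, h]

theorem rowsWhere_sq_eq_zero [Fintype ι] [DecidableEq ι] [Semiring R] (P : ι → Prop)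
    [DecidablePred P] (M : Matrix ι ι R) (hM : ∀ i j, P i → P j → M i j = 0) :
    M.rowsWhere P ^ 2 = 0 := by
  ext i k
  rw [sq, mul_apply, zero_apply]
  refine Finset.sum_eq_zero fun j _ => ?_
  by_cases hi : P i
  · by_cases hj : P j
    · simp [rowsWhere, hM i j hi hj]
    · simp [rowsWhere, hj]
  · simp [rowsWhere, hi]

end Matrix

section Companion

variable {F : Type*} [Field F] {n : ℕ}

theorem companion_apply_eq_zero_of_odd_of_odd (hn : Odd n) (p : F[X]) {i j : Fin n}
    (hi : Odd (i : ℕ)) (hj : Odd (j : ℕ)) : companion n p i j = 0 := by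
  have hlast : (j : ℕ) ≠ n - 1 := by
    rw [Nat.odd_iff] at hn hj; omega
  have hsub : (i : ℕ) ≠ j + 1 := by
    rw [Nat.odd_iff] at hi hj; omega
  simp [companion, hlast, hsub]

theorem companion_apply_eq_zero_of_even_of_even {p : F[X]}
    (hp : ∀ k, Even k → p.coeff k = 0) {i j : Fin n} (hi : Even (i : ℕ)) (hj : Even (j : ℕ)) :
    companion n p i j = 0 := by
  have hsub : (i : ℕ) ≠ j + 1 := by
    rw [Nat.even_iff] at hi hj; omega
  simp [companion, hp i hi, hsub]

theorem exists_sq_eq_zero_companion_eq_add (hn : Odd n) {p : F[X]}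
    (hp : ∀ k, Even k → p.coeff k = 0) :
    ∃ A B : Matrix (Fin n) (Fin n) F, A ^ 2 = 0 ∧ B ^ 2 = 0 ∧ companion n p = A + B := by
  refine ⟨(companion n p).rowsWhere (fun i => Odd (i : ℕ)),
    (companion n p).rowsWhere (fun i => ¬Odd (i : ℕ)), ?_, ?_,
    (Matrix.rowsWhere_add_rowsWhere_not _ _).symm⟩
  · exact Matrix.rowsWhere_sq_eq_zero _ _ fun i j hi hj =>
      companion_apply_eq_zero_of_odd_of_odd hn p hi hj
  · refine Matrix.rowsWhere_sq_eq_zero _ _ fun i j hi hj => ?_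
    rw [Nat.not_odd_iff_even] at hi hj
    exact companion_apply_eq_zero_of_even_of_even hp hi hj

end Companion

namespace Polynomial

variable {R : Type*} [CommSemiring R]

theorem coeff_X_mul_comp_X_sq_of_even (q : R[X]) {k : ℕ} (hk : Even k) :
    (X * q.comp (X ^ 2)).coeff k = 0 := by
  obtain ⟨m, rfl⟩ := hk
  rcases m with _ | m
  · simp
  · rw [show m + 1 + (m + 1) = 2 * m + 1 + 1 by omega, coeff_X_mul,
      ← expand_eq_comp_X_pow, coeff_expand two_pos, if_neg (by omega)]

theorem odd_natDegree_of_coeff_even_eq_zero {p : R[X]} (hp : ∀ k, Even k → p.coeff k = 0)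
    (h0 : p ≠ 0) : Odd p.natDegree := by
  by_contra hodd
  exact h0 (leadingCoeff_eq_zero.mp (hp _ (Nat.not_odd_iff_even.mp hodd)))

end Polynomial

theorem companion_odd_sum_two_square_zero_general (F : Type*) [Field F]
    (p : Polynomial F)
    (hodd : ∃ q : Polynomial F, p = X * q.comp (X ^ 2)) :
    ∃ A B : Matrix (Fin p.natDegree) (Fin p.natDegree) F,
      A ^ 2 = 0 ∧ B ^ 2 = 0 ∧ companion p.natDegree p = A + B := by
  obtain ⟨q, rfl⟩ := hodd
  have hcoeff : ∀ k, Even k → (X * q.comp (X ^ 2)).coeff k = 0 :=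
    fun _ => coeff_X_mul_comp_X_sq_of_even q
  rcases eq_or_ne (X * q.comp (X ^ 2)) 0 with h0 | h0
  · rw [h0, natDegree_zero]
    exact ⟨0, 0, Subsingleton.elim _ _, Subsingleton.elim _ _, Subsingleton.elim _ _⟩
  · exact exists_sq_eq_zero_companion_eq_add (odd_natDegree_of_coeff_even_eq_zero hcoeff h0) hcoeff

/-- For every odd monic polynomial `p` (i.e. `p(t) = t·q(t²)`), the companion
matrix of `p` is the sum of two square-zero matrices. -/
theorem companion_odd_sum_two_square_zero (F : Type*) [Field F]
    (p : Polynomial F) (hp : p.Monic)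
    (hodd : ∃ q : Polynomial F, p = X * q.comp (X ^ 2)) :
    ∃ A B : Matrix (Fin p.natDegree) (Fin p.natDegree) F,
      A ^ 2 = 0 ∧ B ^ 2 = 0 ∧ companion p.natDegree p = A + B :=
  companion_odd_sum_two_square_zero_general F p hodd
end

section
/- Let u be an invertible endomorphism of a finite-dimensional vector space V over a field F. If u = a + b where a² = 0 and b² = 0, then ker(a) = im(a), ker(b) = im(b), dim ker(a) = dim ker(b) = dim(V)/2, and V = ker(a) ⊕ ker(b). -/
/-!
Since `a² = b² = 0`, we have `im a ⊆ ker a` and `im b ⊆ ker b`. Invertibility of `u = a + b`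
makes `ker a ∩ ker b = 0` (injectivity) and `V = im u ⊆ im a + im b ⊆ ker a + ker b`
(surjectivity), so `V = ker a ⊕ ker b`. Rank–nullity then gives `dim im a = dim ker b` and
`dim im b = dim ker a`, so `dim ker a ≥ dim im a = dim ker b ≥ dim im b = dim ker a`: all four
dimensions agree, which forces `ker a = im a`, `ker b = im b`, and each has half the dimension.
-/

open LinearMap Module

section Semiring

variable {R M : Type*} [Semiring R] [AddCommMonoid M] [Module R M] {a b : Module.End R M}

theorem Module.End.range_le_ker_of_sq_eq_zero (ha : a ^ 2 = 0) : range a ≤ ker a :=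
  range_le_ker_iff.mpr (by rwa [sq] at ha)

theorem LinearMap.disjoint_ker_of_injective_add (h : Function.Injective (a + b)) :
    Disjoint (ker a) (ker b) := by
  rw [Submodule.disjoint_def]
  intro x hxa hxb
  apply h
  simp [mem_ker.mp hxa, mem_ker.mp hxb]

theorem LinearMap.codisjoint_ker_of_surjective_add (h : Function.Surjective (a + b))
    (ha : range a ≤ ker a) (hb : range b ≤ ker b) : Codisjoint (ker a) (ker b) := by
  rw [codisjoint_iff, ← top_le_iff, ← range_eq_top.mpr h]
  exact (range_add_le a b).trans (sup_le_sup ha hb)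

end Semiring

section DivisionRing

variable {K V : Type*} [DivisionRing K] [AddCommGroup V] [Module K V] [FiniteDimensional K V]
  {a b : Module.End K V}

theorem LinearMap.finrank_range_eq_finrank_ker_of_isCompl (h : IsCompl (ker a) (ker b)) :
    finrank K (range a) = finrank K (ker b) := by
  have hrank := finrank_range_add_finrank_ker a
  have hcompl := Submodule.finrank_add_eq_of_isCompl h
  omega

theorem LinearMap.ker_eq_range_of_isCompl_ker (h : IsCompl (ker a) (ker b))
    (ha : range a ≤ ker a) (hb : range b ≤ ker b) : ker a = range a := by
  have hra := finrank_range_eq_finrank_ker_of_isCompl h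
  have hrb := finrank_range_eq_finrank_ker_of_isCompl h.symm
  have hle_a := Submodule.finrank_mono ha
  have hle_b := Submodule.finrank_mono hb
  exact (Submodule.eq_of_le_of_finrank_le ha (by omega)).symm

theorem LinearMap.two_mul_finrank_ker_of_ker_eq_range (h : ker a = range a) :
    2 * finrank K (ker a) = finrank K V := by
  have hrank := finrank_range_add_finrank_ker a
  rw [← h] at hrank
  omega

end DivisionRing

/-- If an invertible endomorphism `u` of a finite-dimensional space is the
sum of two square-zero endomorphisms `a` and `b`, then `ker a = im a`,
`ker b = im b`, `dim ker a = dim ker b = dim V / 2`, and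
`V = ker a ⊕ ker b`. -/
theorem invertible_sum_two_square_zero_structure (F : Type*) [Field F]
    (V : Type*) [AddCommGroup V] [Module F V] [FiniteDimensional F V]
    (u a b : Module.End F V) (hu : IsUnit u) (hab : u = a + b)
    (ha : a ^ 2 = 0) (hb : b ^ 2 = 0) :
    LinearMap.ker a = LinearMap.range a ∧
    LinearMap.ker b = LinearMap.range b ∧
    2 * Module.finrank F (LinearMap.ker a) = Module.finrank F V ∧
    2 * Module.finrank F (LinearMap.ker b) = Module.finrank F V ∧
    IsCompl (LinearMap.ker a) (LinearMap.ker b) := by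
  subst hab
  have hbij := (Module.End.isUnit_iff _).mp hu
  have hra := Module.End.range_le_ker_of_sq_eq_zero ha
  have hrb := Module.End.range_le_ker_of_sq_eq_zero hb
  have hcompl : IsCompl (ker a) (ker b) :=
    ⟨disjoint_ker_of_injective_add hbij.injective,
      codisjoint_ker_of_surjective_add hbij.surjective hra hrb⟩
  have hka := ker_eq_range_of_isCompl_ker hcompl hra hrb
  have hkb := ker_eq_range_of_isCompl_ker hcompl.symm hrb hra
  exact ⟨hka, hkb, two_mul_finrank_ker_of_ker_eq_range hka,
    two_mul_finrank_ker_of_ker_eq_range hkb, hcompl⟩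
end

section
/- Let n ≥ 1, p a monic polynomial of degree n over a field F, and A ∈ Mat_{2n}(F) a rank-n idempotent matrix. Then there exists a square-zero matrix S ∈ Mat_{2n}(F) such that A − S is similar to the companion matrix of p(t(t−1)). -/
open Polynomial

/-!
Let `N` be the companion matrix of `p`. On `Fⁿ ⊕ Fⁿ` the block matrix `M = [[1, 1], [N, 0]]`
is `E - S` with `E = [[1, 0], [N, 0]]` idempotent and `S = [[0, -1], [0, 0]]` square-zero. `E` is
similar to `[[1, 0], [0, 0]]`, hence to `A`, and conjugating `S` along gives the square-zero
matrix of the theorem; it remains to see that `M` is similar to the companion matrix of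
`q = p(t(t-1))`. Since `M² - M = diag(N, N)`, `q(M)` kills `(0, e₀)`. Ordering the basis so that
the two summands interleave, `M` becomes upper Hessenberg with ones on the subdiagonal, so the
Krylov vectors `Mʲ (0, e₀)` form a unitriangular basis, in which `M` acts by the companion matrix
of `q`.
-/

open Matrix

section Polynomial

variable {R : Type*} [CommRing R]

theorem natDegree_X_sq_sub_X [Nontrivial R] : (X ^ 2 - X : R[X]).natDegree = 2 := by
  rw [natDegree_sub_eq_left_of_natDegree_lt] <;> simp

theorem monic_X_sq_sub_X [Nontrivial R] : (X ^ 2 - X : R[X]).Monic :=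
  monic_X_pow_sub (by simp)

theorem aeval_mulVec_eq_sum_add {m : Type*} [Fintype m] [DecidableEq m] (H : Matrix m m R)
    {q : R[X]} (hq : q.Monic) {d : ℕ} (hd : q.natDegree = d) (v : m → R) :
    aeval H q *ᵥ v = ∑ k ∈ Finset.range d, q.coeff k • (H ^ k *ᵥ v) + H ^ d *ᵥ v := by
  rw [aeval_eq_sum_range, hd, Finset.sum_range_succ, ← hd, hq.coeff_natDegree, one_smul, hd,
    add_mulVec, sum_mulVec]
  simp only [smul_mulVec]

end Polynomial

section Companion

variable {F : Type*} [Field F] {n : ℕ} (p : F[X])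

theorem companion_mulVec_single_of_lt (j : Fin n) (hj : (j : ℕ) + 1 < n) :
    companion n p *ᵥ Pi.single j 1 = Pi.single ⟨j + 1, hj⟩ 1 := by
  ext i
  simp only [mulVec_single_one, col_apply, companion, Pi.single_apply, Fin.ext_iff]
  split_ifs <;> simp_all <;> omega

theorem companion_mulVec_single_last (hn : 0 < n) :
    companion n p *ᵥ Pi.single ⟨n - 1, by omega⟩ 1 = fun i : Fin n => -p.coeff i := by
  ext i
  simp [companion]

theorem companion_pow_mulVec_single_zero (hn : 0 < n) {k : ℕ} (hk : k < n) :
    companion n p ^ k *ᵥ Pi.single ⟨0, hn⟩ 1 = Pi.single ⟨k, hk⟩ 1 := by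
  induction k with
  | zero => rw [pow_zero, one_mulVec]
  | succ k ih =>
    rw [pow_succ', ← mulVec_mulVec, ih (by omega), companion_mulVec_single_of_lt p _ hk]

theorem aeval_companion_mulVec_single_zero (hn : 0 < n) (hp : p.Monic)
    (hdeg : p.natDegree = n) : aeval (companion n p) p *ᵥ Pi.single ⟨0, hn⟩ 1 = 0 := by
  have hpow : companion n p ^ (n - 1 + 1) *ᵥ Pi.single ⟨0, hn⟩ 1 =
      fun i : Fin n => -p.coeff i := by
    rw [pow_succ', ← mulVec_mulVec, companion_pow_mulVec_single_zero p hn (by omega),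
      companion_mulVec_single_last p hn]
  rw [Nat.sub_add_cancel hn] at hpow
  rw [aeval_mulVec_eq_sum_add _ hp hdeg, hpow, Finset.sum_range]
  ext i
  simp [companion_pow_mulVec_single_zero p hn, Pi.single_apply]

end Companion

section Krylov

variable {R : Type*} [CommRing R] {m : ℕ}

structure IsUnitUpperHessenberg (H : Matrix (Fin m) (Fin m) R) : Prop where
  eq_zero : ∀ i j : Fin m, (j : ℕ) + 1 < i → H i j = 0
  eq_one : ∀ i j : Fin m, (i : ℕ) = j + 1 → H i j = 1

def krylov (H : Matrix (Fin m) (Fin m) R) (v : Fin m → R) : Matrix (Fin m) (Fin m) R :=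
  of fun i j => (H ^ (j : ℕ) *ᵥ v) i

theorem krylov_mulVec (H : Matrix (Fin m) (Fin m) R) (v w : Fin m → R) :
    krylov H v *ᵥ w = ∑ j, w j • (H ^ (j : ℕ) *ᵥ v) := by
  ext i
  simp [krylov, mulVec, dotProduct, mul_comm]

theorem krylov_mulVec_single (H : Matrix (Fin m) (Fin m) R) (v : Fin m → R) (j : Fin m) :
    krylov H v *ᵥ Pi.single j 1 = H ^ (j : ℕ) *ᵥ v := by
  ext i
  simp [krylov]

theorem IsUnitUpperHessenberg.pow_mulVec_single_zero {H : Matrix (Fin m) (Fin m) R}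
    (hH : IsUnitUpperHessenberg H) (hm : 0 < m) (k : ℕ) (i : Fin m) (hki : k ≤ i) :
    (H ^ k *ᵥ Pi.single ⟨0, hm⟩ 1) i = if (i : ℕ) = k then 1 else 0 := by
  induction k generalizing i with
  | zero =>
    rw [pow_zero, one_mulVec]
    simp [Pi.single_apply, Fin.ext_iff]
  | succ k ih =>
    have hk : k < m := by omega
    -- in `∑ l, H i l * (Hᵏ e₀) l` only `l = k` survives: `H i l = 0` for `l < k`, and the
    -- induction hypothesis kills `l > k`
    rw [pow_succ', ← mulVec_mulVec, mulVec, dotProduct, Finset.sum_eq_single ⟨k, hk⟩]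
    · rw [ih _ le_rfl, if_pos rfl, mul_one]
      by_cases hi : (i : ℕ) = k + 1
      · rw [if_pos hi, hH.eq_one _ _ hi]
      · rw [if_neg hi, hH.eq_zero _ _ (by simp only; omega)]
    · intro l _ hl
      rcases lt_or_gt_of_ne (Fin.val_ne_of_ne hl) with hlk | hlk
      · rw [hH.eq_zero _ _ (by simp only at hlk; omega), zero_mul]
      · rw [ih _ hlk.le, if_neg hlk.ne', mul_zero]
    · simp

theorem IsUnitUpperHessenberg.det_krylov {H : Matrix (Fin m) (Fin m) R}
    (hH : IsUnitUpperHessenberg H) (hm : 0 < m) :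
    (krylov H (Pi.single ⟨0, hm⟩ 1)).det = 1 := by
  have htri : (krylov H (Pi.single ⟨0, hm⟩ 1)).IsUpperTriangular := fun i j (hij : j < i) => by
    rw [krylov, of_apply, hH.pow_mulVec_single_zero hm _ i hij.le,
      if_neg (Fin.val_ne_of_ne hij.ne')]
  rw [det_of_isUpperTriangular htri]
  refine Finset.prod_eq_one fun i _ => ?_
  rw [krylov, of_apply, hH.pow_mulVec_single_zero hm _ i le_rfl, if_pos rfl]

variable {F : Type*} [Field F]

theorem mul_krylov_eq_krylov_mul_companion (H : Matrix (Fin m) (Fin m) F) (v : Fin m → F)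
    {q : F[X]} (hq : q.Monic) (hdeg : q.natDegree = m) (hv : aeval H q *ᵥ v = 0) :
    H * krylov H v = krylov H v * companion m q := by
  refine ext_of_mulVec_single fun j => ?_
  rw [← mulVec_mulVec, ← mulVec_mulVec, krylov_mulVec_single, mulVec_mulVec, ← pow_succ']
  by_cases hj : (j : ℕ) + 1 < m
  · rw [companion_mulVec_single_of_lt q j hj, krylov_mulVec_single]
  · have hm : 0 < m := j.pos
    rw [show j = ⟨m - 1, by omega⟩ from Fin.ext (by simp only; omega),
      companion_mulVec_single_last q hm, krylov_mulVec, Nat.sub_add_cancel hm]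
    rw [aeval_mulVec_eq_sum_add H hq hdeg, Finset.sum_range] at hv
    simpa [neg_smul, eq_neg_iff_add_eq_zero, add_comm] using hv

theorem IsUnitUpperHessenberg.isConj_companion {H : Matrix (Fin m) (Fin m) F}
    (hH : IsUnitUpperHessenberg H) (hm : 0 < m) {q : F[X]} (hq : q.Monic)
    (hdeg : q.natDegree = m) (hv : aeval H q *ᵥ Pi.single ⟨0, hm⟩ 1 = 0) :
    IsConj H (companion m q) := by
  have hK : IsUnit (krylov H (Pi.single ⟨0, hm⟩ 1)) := by
    rw [isUnit_iff_isUnit_det, hH.det_krylov hm]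
    exact isUnit_one
  exact IsConj.symm ⟨hK.unit, (mul_krylov_eq_krylov_mul_companion H _ hq hdeg hv).symm⟩

end Krylov

section Idempotent

theorem isConj_toMatrix_toLin' {R ι : Type*} [CommRing R] [Fintype ι] [DecidableEq ι]
    (A : Matrix ι ι R) (b : Module.Basis ι R (ι → R)) :
    IsConj A (LinearMap.toMatrix b b (toLin' A)) := by
  let std := Pi.basisFun R ι
  refine ⟨⟨b.toMatrix std, std.toMatrix b, b.toMatrix_mul_toMatrix_flip std,
    std.toMatrix_mul_toMatrix_flip b⟩, ?_⟩
  have hconj := basis_toMatrix_mul_linearMap_toMatrix_mul_basis_toMatrix std b std b (toLin' A)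
  rw [LinearMap.toMatrix_eq_toMatrix', LinearMap.toMatrix'_toLin'] at hconj
  change b.toMatrix std * A = _ * b.toMatrix std
  conv_lhs => rw [← hconj]
  simp only [← mul_assoc, b.toMatrix_mul_toMatrix_flip std, one_mul]

variable {F : Type*} [Field F]

theorem isConj_fromBlocks_one_zero_of_isIdempotentElem {r s : ℕ}
    {A : Matrix (Fin r ⊕ Fin s) (Fin r ⊕ Fin s) F} (hA : IsIdempotentElem A)
    (hrank : A.rank = r) : IsConj A (fromBlocks 1 0 0 0) := by
  set f := toLin' A
  have hf : IsIdempotentElem f := hA.map toLinAlgEquiv'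
  have hrange : Module.finrank F (LinearMap.range f) = r := hrank
  have hker : Module.finrank F (LinearMap.ker f) = s := by
    have := LinearMap.finrank_range_add_finrank_ker f
    simp only [Module.finrank_fintype_fun_eq_card, Fintype.card_sum, Fintype.card_fin] at this
    omega
  let B := ((Module.finBasisOfFinrankEq F _ hrange).prod
    (Module.finBasisOfFinrankEq F _ hker)).map
      (Submodule.prodEquivOfIsCompl _ _ (LinearMap.IsIdempotentElem.isCompl hf))
  have hfix (x : LinearMap.range f) : A *ᵥ x = x :=
    (LinearMap.IsIdempotentElem.mem_range_iff hf).1 x.2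
  convert isConj_toMatrix_toLin' A B
  ext (i | i) (j | j) <;>
    simp [LinearMap.toMatrix_apply, B, f, hfix, one_apply, Finsupp.single_apply, eq_comm]

end Idempotent

section Blocks

theorem exists_sq_eq_zero_isConj_sub {R : Type*} [Ring R] {a b s : R} (hab : IsConj a b)
    (hs : s ^ 2 = 0) : ∃ t : R, t ^ 2 = 0 ∧ IsConj (a - t) (b - s) := by
  obtain ⟨c, hc⟩ := hab
  refine ⟨↑c⁻¹ * s * c, ?_, c, ?_⟩
  · rw [sq] at hs ⊢
    simp [mul_assoc, ← mul_assoc s s, hs]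
  · rw [SemiconjBy, mul_sub, sub_mul, hc.eq, ← mul_assoc, ← mul_assoc, Units.mul_inv, one_mul]

variable {R : Type*} [CommRing R] {m : Type*} [Fintype m] [DecidableEq m]

theorem isConj_fromBlocks_one_zero (N : Matrix m m R) :
    IsConj (fromBlocks 1 0 N 0) (fromBlocks (1 : Matrix m m R) 0 0 (0 : Matrix m m R)) :=
  ⟨⟨fromBlocks 1 0 (-N) 1, fromBlocks 1 0 N 1, by simp [fromBlocks_multiply],
    by simp [fromBlocks_multiply]⟩, by simp [SemiconjBy, fromBlocks_multiply]⟩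

theorem fromBlocks_zero_sq_eq_zero {n : Type*} [Fintype n] [DecidableEq n] (B : Matrix m n R) :
    fromBlocks (0 : Matrix m m R) B 0 (0 : Matrix n n R) ^ 2 = 0 := by
  simp [sq, fromBlocks_multiply]

theorem exists_sq_eq_zero_isConj_sub_fromBlocks_one_one {A : Matrix (m ⊕ m) (m ⊕ m) R}
    (hA : IsConj A (fromBlocks 1 0 0 0)) (N : Matrix m m R) :
    ∃ S, S ^ 2 = 0 ∧ IsConj (A - S) (fromBlocks 1 1 N 0) := by
  have hM : fromBlocks 1 0 N 0 - fromBlocks 0 (-1 : Matrix m m R) 0 0 =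
      fromBlocks 1 1 N 0 := by
    simp [sub_eq_add_neg, fromBlocks_neg, fromBlocks_add]
  rw [← hM]
  exact exists_sq_eq_zero_isConj_sub (hA.trans (isConj_fromBlocks_one_zero N).symm)
    (fromBlocks_zero_sq_eq_zero _)

theorem fromBlocks_one_one_sq_sub_self (N : Matrix m m R) :
    fromBlocks 1 1 N 0 ^ 2 - fromBlocks 1 1 N 0 = fromBlocks N 0 0 N := by
  simp [sq, fromBlocks_multiply, sub_eq_add_neg, fromBlocks_neg, fromBlocks_add]

theorem aeval_fromBlocks_diagonal {n : Type*} [Fintype n] [DecidableEq n]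
    (A : Matrix m m R) (D : Matrix n n R) (g : R[X]) :
    aeval (fromBlocks A 0 0 D) g = fromBlocks (aeval A g) 0 0 (aeval D g) := by
  induction g using Polynomial.induction_on' with
  | add g h hg hh => simp [hg, hh, fromBlocks_add]
  | monomial k a =>
    simp [aeval_monomial, ← Algebra.smul_def, fromBlocks_diagonal_pow, fromBlocks_smul]

theorem aeval_comp_fromBlocks_one_one (N : Matrix m m R) (p : R[X]) :
    aeval (fromBlocks 1 1 N 0) (p.comp (X ^ 2 - X)) =
      fromBlocks (aeval N p) 0 0 (aeval N p) := by
  rw [aeval_comp, map_sub, aeval_X_pow, aeval_X, fromBlocks_one_one_sq_sub_self,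
    aeval_fromBlocks_diagonal]

end Blocks

section Model

variable {F : Type*} [Field F] {n : ℕ}

noncomputable def finSumFinInterleave (n : ℕ) : Fin n ⊕ Fin n ≃ Fin (2 * n) :=
  Equiv.ofBijective
    (Sum.elim (fun i => ⟨2 * i + 1, by omega⟩) (fun i => ⟨2 * i, by omega⟩)) <| by
    refine (Fintype.bijective_iff_injective_and_card _).2 ⟨?_, by simp [two_mul]⟩
    rintro (i | i) (j | j) h <;> simp [Fin.ext_iff] at h <;>
      first | omega | simp [Fin.ext_iff, h]

@[simp]
theorem finSumFinInterleave_inl (i : Fin n) : (finSumFinInterleave n (.inl i) : ℕ) = 2 * i + 1 :=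
  rfl

@[simp]
theorem finSumFinInterleave_inr (i : Fin n) : (finSumFinInterleave n (.inr i) : ℕ) = 2 * i :=
  rfl

theorem isUnitUpperHessenberg_reindex_fromBlocks_companion (p : F[X]) :
    IsUnitUpperHessenberg (reindex (finSumFinInterleave n) (finSumFinInterleave n)
      (fromBlocks 1 1 (companion n p) 0)) := by
  set e := finSumFinInterleave n
  constructor <;> intro i j hij <;> obtain ⟨x, rfl⟩ := e.surjective i <;>
    obtain ⟨y, rfl⟩ := e.surjective j <;> rcases x with i | i <;> rcases y with j | j <;>
    simp [e, companion, one_apply, Fin.ext_iff] at hij ⊢ <;> (try split_ifs) <;>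
    first | rfl | omega

theorem isConj_reindex_fromBlocks_companion (hn : 0 < n) {p : F[X]} (hp : p.Monic)
    (hdeg : p.natDegree = n) :
    IsConj (reindex (finSumFinInterleave n) (finSumFinInterleave n)
      (fromBlocks 1 1 (companion n p) 0)) (companion (2 * n) (p.comp (X ^ 2 - X))) := by
  set e := finSumFinInterleave n
  refine (isUnitUpperHessenberg_reindex_fromBlocks_companion p).isConj_companion (by omega)
    (hp.comp monic_X_sq_sub_X (by rw [natDegree_X_sq_sub_X]; omega))
    (by rw [natDegree_comp, hdeg, natDegree_X_sq_sub_X, mul_comm]) ?_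
  rw [← coe_reindexAlgEquiv F F e, aeval_algHom_apply, aeval_comp_fromBlocks_one_one,
    show (⟨0, by omega⟩ : Fin (2 * n)) = e (.inr ⟨0, hn⟩) from rfl]
  ext i
  obtain ⟨x, rfl⟩ := e.surjective i
  rcases x with i | i
  · simp
  · simpa using congrFun (aeval_companion_mulVec_single_zero p hn hp hdeg) i

end Model

/-- If `p` is a monic polynomial of degree `n ≥ 1` and `A` is a rank-`n`
idempotent `2n × 2n` matrix, then there exists a square-zero matrix `S` such
that `A - S` is similar to the companion matrix of `p(t(t-1))`. -/
theorem idempotent_sub_square_zero_similar_companion (F : Type*) [Field F]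
    (n : ℕ) (hn : 1 ≤ n) (p : Polynomial F) (hp : p.Monic) (hdeg : p.natDegree = n)
    (A : Matrix (Fin (2 * n)) (Fin (2 * n)) F) (hidem : A ^ 2 = A)
    (hrank : A.rank = n) :
    ∃ S : Matrix (Fin (2 * n)) (Fin (2 * n)) F, S ^ 2 = 0 ∧
      ∃ P : (Matrix (Fin (2 * n)) (Fin (2 * n)) F)ˣ,
        A - S = (P : Matrix (Fin (2 * n)) (Fin (2 * n)) F) *
          companion (2 * n) (p.comp (X ^ 2 - X)) *
          ((↑P⁻¹ : Matrix (Fin (2 * n)) (Fin (2 * n)) F)) := by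
  set e := finSumFinInterleave n
  set φ := (reindexAlgEquiv F F e).toRingHom
  have hidem' : IsIdempotentElem (reindex e.symm e.symm A) := by
    simpa [IsIdempotentElem, sq] using congrArg (reindex e.symm e.symm) hidem
  obtain ⟨S, hS, hAS⟩ := exists_sq_eq_zero_isConj_sub_fromBlocks_one_one
    (isConj_fromBlocks_one_zero_of_isIdempotentElem hidem' (by rw [rank_reindex, hrank]))
    (companion n p)
  obtain ⟨c, hc⟩ := (φ.toMonoidHom.map_isConj hAS).trans
    (isConj_reindex_fromBlocks_companion hn hp hdeg)
  refine ⟨φ S, by rw [← map_pow, hS, map_zero], c⁻¹, ?_⟩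
  have hφA : φ (reindex e.symm e.symm A) = A := by simp [φ]
  rw [RingHom.toMonoidHom_eq_coe, MonoidHom.coe_coe, map_sub, hφA] at hc
  rw [inv_inv, mul_assoc, ← hc.eq, Units.inv_mul_cancel_left]
end
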